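/- arXiv:1708.08302 — 2 statements merged into one kernel-verified Lean document; each statement's English description precedes it below -/
import Mathlib

section
/- Let φ ∈ Γ(ℝ) be strictly convex on its domain I with int I ≠ ∅ and differentiable on int I, and let Φ(x) := ∫_T φ∘x dμ. Let x̄, x be in the effective domain of Φ with Φ(x̄) ∈ ℝ and Φ(x) ∈ ℝ. Then the one-sided directional derivative Φ'(x̄; x - x̄) := lim_{s→0⁺} [Φ(x̄ + s(x - x̄)) - Φ(x̄)]/s exists in [-∞, ∞) and equals the extended integral ∫_T φ'(x̄(t))·(x(t) - x̄(t)) dμ(t); moreover Φ(x) - Φ(x̄) - Φ'(x̄; x - x̄) = ∫_T [φ(x(t)) - φ(x̄(t)) - φ'(x̄(t))(x(t) - x̄(t))] dμ(t) ≥ 0. -/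
/-!
For `u = x̄(t)`, `v = x(t)` in the domain of `φ`, convexity makes the difference quotient
`q_s = [φ(u + s(v - u)) - φ(u)]/s` nondecreasing on `(0, 1]` and bounded by `φ(v) - φ(u)`, so
`θ_s = φ(v) - φ(u) - q_s` is nonnegative, nonincreasing in `s`, and tends to
`φ(v) - φ(u) - φ'(u)(v - u)` as `s → 0⁺`. As `Φ(x̄)` and `Φ(x)` are finite,
`[Φ(x̄ + s(x - x̄)) - Φ(x̄)]/s = ∫ (φ∘x - φ∘x̄) - ∫ θ_s`, and monotone convergence lets `s → 0⁺`
in the last integral. Each extended integral that occurs is that of an integrable real function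
minus a nonnegative one, which is how `∞ - ∞` is avoided.
-/

open MeasureTheory ENNReal Filter Set Topology

/-- Positive part of an extended real, in `ℝ≥0∞`. -/
noncomputable def epos (a : EReal) : ℝ≥0∞ := if a = ⊤ then ⊤ else ENNReal.ofReal a.toReal

/-- Extended integral `∫ f dμ := ∫ f₊ dμ - ∫ f₋ dμ` with the convention `∞ - ∞ := ∞`. -/
noncomputable def eintegral {T : Type*} [MeasurableSpace T] (μ : Measure T) (f : T → EReal) :
    EReal :=
  if (∫⁻ t, epos (f t) ∂μ) = ⊤ then ⊤
  else ((∫⁻ t, epos (f t) ∂μ : ℝ≥0∞) : EReal) - ((∫⁻ t, epos (- f t) ∂μ : ℝ≥0∞) : EReal)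


/-- The integral functional Phi(x) := extended integral of phi(x(.)) with respect to mu. -/
noncomputable def Phi {T : Type*} [MeasurableSpace T] (μ : Measure T) (φ : ℝ → EReal)
    (x : T → ℝ) : EReal := eintegral μ (fun t => φ (x t))

namespace EReal

lemma coe_sub_sub_cancel (a : ℝ) (b : EReal) : (a : EReal) - ((a : EReal) - b) = b := by
  induction b <;> simp [← EReal.coe_sub]

lemma toENNReal_neg_coe_ennreal (c : ℝ≥0∞) : (-(c : EReal)).toENNReal = 0 :=
  toENNReal_of_nonpos (by simpa using coe_ennreal_nonneg c)

lemma coe_sub_coe_ennreal_le (a : ℝ) (c : ℝ≥0∞) : (a : EReal) - c ≤ a := by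
  rw [sub_eq_add_neg]
  exact add_le_of_nonpos_right (toENNReal_eq_zero_iff.1 (toENNReal_neg_coe_ennreal c))

lemma toReal_toENNReal_sub_toReal_toENNReal_neg (x : EReal) :
    x.toENNReal.toReal - (-x).toENNReal.toReal = x.toReal := by
  induction x with
  | bot => simp
  | top => simp
  | coe a => simp [← coe_neg, ENNReal.toReal_ofReal', max_zero_sub_max_neg_zero_eq_self]

lemma continuous_coe_sub (a : ℝ) : Continuous fun y : EReal => (a : EReal) - y :=
  continuous_iff_continuousAt.2 fun y =>
    (continuousAt_add (p := ((a : EReal), -y)) (Or.inl (coe_ne_top a))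
      (Or.inl (coe_ne_bot a))).comp (f := fun y : EReal => ((a : EReal), -y)) (by fun_prop)

lemma coe_add_mul_sub_sub_mul_inv (a b : ℝ) (c : ℝ≥0∞) {s : ℝ} (hs : 0 < s) :
    ((((a + s * b : ℝ) : EReal) - (ENNReal.ofReal s * c : ℝ≥0∞)) - a) * ((s⁻¹ : ℝ) : EReal) =
      (b : EReal) - c := by
  induction c using ENNReal.recTopCoe with
  | top =>
    rw [ENNReal.mul_top (ENNReal.ofReal_pos.2 hs).ne', coe_ennreal_top, sub_top, bot_sub, sub_top,
      bot_mul_coe_of_pos (inv_pos.2 hs)]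
  | coe c =>
    rw [← ENNReal.ofReal_coe_nnreal, ← ENNReal.ofReal_mul hs.le, coe_ennreal_ofReal,
      coe_ennreal_ofReal, max_eq_left (by positivity), max_eq_left (by positivity)]
    norm_cast
    field_simp
    ring

end EReal

lemma epos_eq_toENNReal : epos = EReal.toENNReal :=
  rfl

section eintegral

variable {T : Type*} [MeasurableSpace T] {μ : Measure T}

lemma MeasureTheory.Integrable.lintegral_ofReal_ne_top {k : T → ℝ} (hk : Integrable k μ) :
    ∫⁻ t, ENNReal.ofReal (k t) ∂μ ≠ ⊤ :=
  ((lintegral_ofReal_le_lintegral_enorm k).trans_lt hk.2).ne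

lemma eintegral_of_lintegral_ne_top {f : T → EReal} (h : ∫⁻ t, (f t).toENNReal ∂μ ≠ ⊤) :
    eintegral μ f = (∫⁻ t, (f t).toENNReal ∂μ : ℝ≥0∞) - (∫⁻ t, (-f t).toENNReal ∂μ : ℝ≥0∞) := by
  rw [eintegral, epos_eq_toENNReal, if_neg h]

lemma eintegral_of_lintegral_eq_top {f : T → EReal} (h : ∫⁻ t, (f t).toENNReal ∂μ = ⊤) :
    eintegral μ f = ⊤ := by
  rw [eintegral, epos_eq_toENNReal, if_pos h]

lemma eintegral_congr_ae {f g : T → EReal} (h : f =ᵐ[μ] g) : eintegral μ f = eintegral μ g := by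
  have hpos : ∫⁻ t, epos (f t) ∂μ = ∫⁻ t, epos (g t) ∂μ := lintegral_congr_ae (h.fun_comp epos)
  have hneg : ∫⁻ t, epos (-f t) ∂μ = ∫⁻ t, epos (-g t) ∂μ :=
    lintegral_congr_ae ((h.fun_comp Neg.neg).fun_comp epos)
  rw [eintegral, eintegral, hpos, hneg]

lemma eintegral_coe_ennreal (c : T → ℝ≥0∞) :
    eintegral μ (fun t => (c t : EReal)) = ∫⁻ t, c t ∂μ := by
  by_cases h : ∫⁻ t, c t ∂μ = ⊤
  · rw [eintegral_of_lintegral_eq_top (by simpa using h), h, EReal.coe_ennreal_top]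
  · rw [eintegral_of_lintegral_ne_top (by simpa using h)]
    simp only [EReal.toENNReal_coe, EReal.toENNReal_neg_coe_ennreal, lintegral_zero,
      EReal.coe_ennreal_zero, sub_zero]

lemma eintegral_of_ae_nonneg {f : T → EReal} (hf : ∀ᵐ t ∂μ, 0 ≤ f t) :
    eintegral μ f = ∫⁻ t, (f t).toENNReal ∂μ := by
  rw [← eintegral_coe_ennreal]
  exact eintegral_congr_ae (hf.mono fun t ht => (EReal.coe_toENNReal ht).symm)

lemma eintegral_coe_of_integrable {k : T → ℝ} (hk : Integrable k μ) :
    eintegral μ (fun t => (k t : EReal)) = ∫ t, k t ∂μ := by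
  rw [eintegral_of_lintegral_ne_top hk.lintegral_ofReal_ne_top]
  simp only [EReal.real_coe_toENNReal, ← EReal.coe_neg]
  rw [integral_eq_lintegral_pos_part_sub_lintegral_neg_part hk, EReal.coe_sub,
    EReal.coe_ennreal_toReal hk.lintegral_ofReal_ne_top,
    EReal.coe_ennreal_toReal (hk.neg.lintegral_ofReal_ne_top (k := fun t => -k t))]

lemma eintegral_coe_sub_coe_ennreal {g : T → ℝ} (hg : Integrable g μ) {c : T → ℝ≥0∞}
    (hc : AEMeasurable c μ) :
    eintegral μ (fun t => (g t : EReal) - c t) = (∫ t, g t ∂μ : ℝ) - (∫⁻ t, c t ∂μ : ℝ≥0∞) := by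
  by_cases hc_top : ∫⁻ t, c t ∂μ = ⊤
  · have hpos : ∫⁻ t, ((g t : EReal) - c t).toENNReal ∂μ ≠ ⊤ :=
      ne_top_of_le_ne_top hg.lintegral_ofReal_ne_top (lintegral_mono fun t =>
        (EReal.toENNReal_le_toENNReal (EReal.coe_sub_coe_ennreal_le _ _)).trans_eq
          (EReal.real_coe_toENNReal _))
    -- `c ≤ (c - g)⁺ + g⁺` forces the negative part to have infinite integral
    have hneg : ∫⁻ t, (-((g t : EReal) - c t)).toENNReal ∂μ = ⊤ := by
      have hle : ∀ t, c t ≤ (-((g t : EReal) - c t)).toENNReal + ENNReal.ofReal (g t) := by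
        intro t
        rw [EReal.neg_sub (by simp) (by simp), add_comm (-(g t : EReal)), ← sub_eq_add_neg]
        calc c t = (((c t : EReal) - g t) + g t).toENNReal := by
              rw [EReal.sub_add_cancel, EReal.toENNReal_coe]
          _ ≤ _ := EReal.toENNReal_add_le
      have := (lintegral_mono hle).trans
        (lintegral_add_right' _ (ENNReal.measurable_ofReal.comp_aemeasurable hg.aemeasurable)).le
      rw [hc_top, top_le_iff] at this
      exact (ENNReal.add_eq_top.1 this).resolve_right hg.lintegral_ofReal_ne_top
    rw [eintegral_of_lintegral_ne_top hpos, hneg, hc_top, EReal.coe_ennreal_top, EReal.sub_top,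
      EReal.sub_top]
  · have hc_ae : ∀ᵐ t ∂μ, c t < ⊤ := ae_lt_top' hc hc_top
    have hc_int : Integrable (fun t => (c t).toReal) μ :=
      integrable_toReal_of_lintegral_ne_top hc hc_top
    have heq : (fun t => (g t : EReal) - c t) =ᵐ[μ]
        fun t => ((g t - (c t).toReal : ℝ) : EReal) := by
      filter_upwards [hc_ae] with t ht
      rw [EReal.coe_sub, EReal.coe_ennreal_toReal ht.ne]
    rw [eintegral_congr_ae heq,
      eintegral_coe_of_integrable (k := fun t => g t - (c t).toReal) (hg.sub hc_int),
      integral_sub hg hc_int, integral_toReal hc hc_ae, EReal.coe_sub,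
      EReal.coe_ennreal_toReal hc_top]

lemma integrable_toReal_and_ae_ne_top_of_eintegral_eq_coe {f : T → EReal} (hf : AEMeasurable f μ)
    {r : ℝ} (hr : eintegral μ f = r) :
    Integrable (fun t => (f t).toReal) μ ∧ ∀ᵐ t ∂μ, f t ≠ ⊤ := by
  have hpos : ∫⁻ t, (f t).toENNReal ∂μ ≠ ⊤ := fun h => by
    simp [eintegral_of_lintegral_eq_top h] at hr
  have hneg : ∫⁻ t, (-f t).toENNReal ∂μ ≠ ⊤ := fun h => by
    simp [eintegral_of_lintegral_ne_top hpos, h] at hr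
  have hpos_m := hf.ereal_toENNReal
  refine ⟨?_, ?_⟩
  · exact ((integrable_toReal_of_lintegral_ne_top hpos_m hpos).sub
      (integrable_toReal_of_lintegral_ne_top hf.neg.ereal_toENNReal hneg)).congr
        (Eventually.of_forall fun t => EReal.toReal_toENNReal_sub_toReal_toENNReal_neg (f t))
  · filter_upwards [ae_lt_top' hpos_m hpos] with t ht
    exact EReal.toENNReal_ne_top_iff.1 ht.ne

lemma eintegral_eq_integral_toReal {f : T → EReal} (hint : Integrable (fun t => (f t).toReal) μ)
    (htop : ∀ᵐ t ∂μ, f t ≠ ⊤) (hbot : ∀ t, f t ≠ ⊥) :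
    eintegral μ f = ∫ t, (f t).toReal ∂μ := by
  rw [← eintegral_coe_of_integrable hint]
  exact eintegral_congr_ae (htop.mono fun t ht => (EReal.coe_toReal ht (hbot t)).symm)

theorem tendsto_lintegral_nhdsGT_of_antitoneOn {F : ℝ → T → ℝ≥0∞} {f : T → ℝ≥0∞} {a b : ℝ}
    (hab : a < b) (hF : ∀ s, AEMeasurable (F s) μ)
    (h_anti : ∀ᵐ t ∂μ, AntitoneOn (F · t) (Ioo a b))
    (h_lim : ∀ᵐ t ∂μ, Tendsto (F · t) (𝓝[>] a) (𝓝 (f t))) :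
    Tendsto (fun s => ∫⁻ t, F s t ∂μ) (𝓝[>] a) (𝓝 (∫⁻ t, f t ∂μ)) := by
  have hG : AntitoneOn (fun s => ∫⁻ t, F s t ∂μ) (Ioo a b) := fun s hs s' hs' hss' =>
    lintegral_mono_ae (h_anti.mono fun t ht => ht hs hs' hss')
  obtain ⟨u, hu_anti, hu_mem, hu_lim⟩ := exists_seq_strictAnti_tendsto' hab
  have hu : Tendsto u atTop (𝓝[>] a) :=
    tendsto_nhdsWithin_iff.2 ⟨hu_lim, Eventually.of_forall fun n => (hu_mem n).1⟩
  -- the limit of the antitone integral exists; monotone convergence along `u` identifies it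
  have hlim := hG.tendsto_nhdsWithin_Ioo_right (nonempty_Ioo.2 hab) (OrderTop.bddAbove _)
  have hseq : Tendsto (fun n => ∫⁻ t, F (u n) t ∂μ) atTop (𝓝 (∫⁻ t, f t ∂μ)) :=
    lintegral_tendsto_of_tendsto_of_monotone (fun n => hF _)
      (h_anti.mono fun t ht _ _ hmn => ht (hu_mem _) (hu_mem _) (hu_anti.antitone hmn))
      (h_lim.mono fun t ht => ht.comp hu)
  rwa [tendsto_nhds_unique (hlim.comp hu) hseq] at hlim

end eintegral

section convex

variable {φ : ℝ → EReal} {u v : ℝ}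

lemma convexOn_toReal_of_forall_le (hbot : ∀ u, φ u ≠ ⊥)
    (hconv : ∀ u v a b : ℝ, 0 ≤ a → 0 ≤ b → a + b = 1 →
      φ (a * u + b * v) ≤ (a : EReal) * φ u + (b : EReal) * φ v) :
    ConvexOn ℝ {w | φ w ≠ ⊤} fun w => (φ w).toReal := by
  have hle : ∀ ⦃u⦄, φ u ≠ ⊤ → ∀ ⦃v⦄, φ v ≠ ⊤ → ∀ ⦃a b : ℝ⦄, 0 ≤ a → 0 ≤ b → a + b = 1 →
      φ (a • u + b • v) ≤ ((a • (φ u).toReal + b • (φ v).toReal : ℝ) : EReal) := by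
    intro u hu v hv a b ha hb hab
    have := hconv u v a b ha hb hab
    rw [← EReal.coe_toReal hu (hbot u), ← EReal.coe_toReal hv (hbot v)] at this
    exact_mod_cast this
  refine ⟨fun u hu v hv a b ha hb hab => ?_, fun u hu v hv a b ha hb hab => ?_⟩
  · exact ne_top_of_le_ne_top (EReal.coe_ne_top _) (hle hu hv ha hb hab)
  · exact EReal.toReal_le_toReal (hle hu hv ha hb hab) (hbot _) (EReal.coe_ne_top _)

lemma sub_eq_coe_toReal_sub (hbot : ∀ u, φ u ≠ ⊥) (hu : φ u ≠ ⊤) (hv : φ v ≠ ⊤) :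
    φ v - φ u = (((φ v).toReal - (φ u).toReal : ℝ) : EReal) := by
  rw [EReal.coe_sub, EReal.coe_toReal hu (hbot u), EReal.coe_toReal hv (hbot v)]

noncomputable def diffQuot (φ : ℝ → EReal) (u v s : ℝ) : ℝ :=
  ((φ (u + s * (v - u))).toReal - (φ u).toReal) / s

/-- Pointwise form of the paper's `θ_s`. -/
noncomputable def secantGap (φ : ℝ → EReal) (u v s : ℝ) : ℝ :=
  (φ v).toReal - (φ u).toReal - diffQuot φ u v s

lemma apply_add_mul_sub_ne_top (hφ : ConvexOn ℝ {w | φ w ≠ ⊤} fun w => (φ w).toReal)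
    (hu : φ u ≠ ⊤) (hv : φ v ≠ ⊤) {s : ℝ} (hs : s ∈ Icc 0 1) : φ (u + s * (v - u)) ≠ ⊤ := by
  have : AffineMap.lineMap u v s ∈ {w | φ w ≠ ⊤} := hφ.1.lineMap_mem hu hv hs
  rwa [AffineMap.lineMap_apply_ring', add_comm] at this

lemma diffQuot_monotoneOn (hφ : ConvexOn ℝ {w | φ w ≠ ⊤} fun w => (φ w).toReal)
    (hu : φ u ≠ ⊤) (hv : φ v ≠ ⊤) : MonotoneOn (diffQuot φ u v) (Ioc 0 1) := by
  have hline := (hφ.comp_affineMap (AffineMap.lineMap u v)).subset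
    (fun s hs => hφ.1.lineMap_mem hu hv hs) (convex_Icc 0 1)
  intro s hs s' hs' hss'
  have := hline.secant_mono (a := 0) ⟨le_rfl, zero_le_one⟩ (Ioc_subset_Icc_self hs)
    (Ioc_subset_Icc_self hs') hs.1.ne' hs'.1.ne' hss'
  simpa [diffQuot, AffineMap.lineMap_apply_ring', add_comm] using this

lemma secantGap_nonneg (hφ : ConvexOn ℝ {w | φ w ≠ ⊤} fun w => (φ w).toReal) (hu : φ u ≠ ⊤)
    (hv : φ v ≠ ⊤) {s : ℝ} (hs : s ∈ Ioc 0 1) : 0 ≤ secantGap φ u v s := by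
  have := diffQuot_monotoneOn hφ hu hv hs ⟨one_pos, le_rfl⟩ hs.2
  simpa [secantGap, diffQuot] using this

lemma secantGap_antitoneOn (hφ : ConvexOn ℝ {w | φ w ≠ ⊤} fun w => (φ w).toReal)
    (hu : φ u ≠ ⊤) (hv : φ v ≠ ⊤) : AntitoneOn (secantGap φ u v) (Ioc 0 1) :=
  fun _ hs _ hs' hss' => sub_le_sub_left (diffQuot_monotoneOn hφ hu hv hs hs' hss') _

lemma tendsto_secantGap {d : EReal}
    (hd : Tendsto (fun s => (diffQuot φ u v s : EReal)) (𝓝[>] 0) (𝓝 d)) :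
    Tendsto (fun s => (secantGap φ u v s : EReal)) (𝓝[>] 0)
      (𝓝 (((φ v).toReal - (φ u).toReal : ℝ) - d)) := by
  refine (((EReal.continuous_coe_sub _).tendsto d).comp hd).congr fun s => ?_
  simp only [Function.comp_apply, secantGap, EReal.coe_sub]

lemma sub_nonneg_of_tendsto_diffQuot (hφ : ConvexOn ℝ {w | φ w ≠ ⊤} fun w => (φ w).toReal)
    (hu : φ u ≠ ⊤) (hv : φ v ≠ ⊤) {d : EReal}
    (hd : Tendsto (fun s => (diffQuot φ u v s : EReal)) (𝓝[>] 0) (𝓝 d)) :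
    0 ≤ (((φ v).toReal - (φ u).toReal : ℝ) : EReal) - d :=
  ge_of_tendsto (tendsto_secantGap hd) (eventually_of_mem (Ioo_mem_nhdsGT one_pos) fun _ hs =>
    EReal.coe_nonneg.2 (secantGap_nonneg hφ hu hv (Ioo_subset_Ioc_self hs)))

lemma apply_add_mul_sub_eq (hbot : ∀ u, φ u ≠ ⊥)
    (hφ : ConvexOn ℝ {w | φ w ≠ ⊤} fun w => (φ w).toReal) (hu : φ u ≠ ⊤) (hv : φ v ≠ ⊤)
    {s : ℝ} (hs : s ∈ Ioc 0 1) :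
    φ (u + s * (v - u)) = (((φ u).toReal + s * ((φ v).toReal - (φ u).toReal) : ℝ) : EReal) -
      (ENNReal.ofReal s * ENNReal.ofReal (secantGap φ u v s) : ℝ≥0∞) := by
  rw [← ENNReal.ofReal_mul hs.1.le, EReal.coe_ennreal_ofReal,
    max_eq_left (mul_nonneg hs.1.le (secantGap_nonneg hφ hu hv hs)), ← EReal.coe_sub,
    ← EReal.coe_toReal (apply_add_mul_sub_ne_top hφ hu hv (Ioc_subset_Icc_self hs)) (hbot _)]
  congr 1
  simp only [secantGap, diffQuot]
  field_simp [hs.1.ne']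
  ring

end convex

section integralFunctional

variable {T : Type*} [MeasurableSpace T] {μ : Measure T} {φ : ℝ → EReal} {xb x : T → ℝ}
  {D : T → EReal}

lemma measurable_secantGap (hφm : Measurable φ) (hxb : Measurable xb) (hx : Measurable x)
    (s : ℝ) : Measurable fun t => secantGap φ (xb t) (x t) s := by
  unfold secantGap diffQuot
  fun_prop

lemma Phi_add_smul_sub_sub_mul_inv (hbot : ∀ u, φ u ≠ ⊥)
    (hφ : ConvexOn ℝ {w | φ w ≠ ⊤} fun w => (φ w).toReal) (hφm : Measurable φ)
    (hxb : Measurable xb) (hx : Measurable x) (hb : Integrable (fun t => (φ (xb t)).toReal) μ)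
    (hh : Integrable (fun t => (φ (x t)).toReal - (φ (xb t)).toReal) μ)
    (hfin : ∀ᵐ t ∂μ, φ (xb t) ≠ ⊤ ∧ φ (x t) ≠ ⊤) {s : ℝ} (hs : s ∈ Ioc 0 1) :
    (Phi μ φ (xb + s • (x - xb)) - Phi μ φ xb) * ((s⁻¹ : ℝ) : EReal) =
      ((∫ t, ((φ (x t)).toReal - (φ (xb t)).toReal) ∂μ : ℝ) : EReal) -
        (∫⁻ t, ENNReal.ofReal (secantGap φ (xb t) (x t) s) ∂μ : ℝ≥0∞) := by
  have hgap : Measurable fun t => ENNReal.ofReal (secantGap φ (xb t) (x t) s) :=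
    (measurable_secantGap hφm hxb hx s).ennreal_ofReal
  have hPhi_s : Phi μ φ (xb + s • (x - xb)) =
      ((∫ t, (φ (xb t)).toReal ∂μ + s * ∫ t, ((φ (x t)).toReal - (φ (xb t)).toReal) ∂μ : ℝ) :
        EReal) -
        (ENNReal.ofReal s * ∫⁻ t, ENNReal.ofReal (secantGap φ (xb t) (x t) s) ∂μ : ℝ≥0∞) := by
    rw [← integral_const_mul, ← integral_add hb (hh.const_mul s), ← lintegral_const_mul _ hgap,
      ← eintegral_coe_sub_coe_ennreal (g := fun t => _ + _) (hb.add (hh.const_mul s))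
        (hgap.const_mul _).aemeasurable]
    exact eintegral_congr_ae (hfin.mono fun t ht => apply_add_mul_sub_eq hbot hφ ht.1 ht.2 hs)
  have hPhi_b : Phi μ φ xb = ∫ t, (φ (xb t)).toReal ∂μ :=
    eintegral_eq_integral_toReal hb (hfin.mono fun _ ht => ht.1) fun _ => hbot _
  rw [hPhi_s, hPhi_b, EReal.coe_add_mul_sub_sub_mul_inv _ _ _ hs.1]

lemma ae_tendsto_ofReal_secantGap (hbot : ∀ u, φ u ≠ ⊥)
    (hfin : ∀ᵐ t ∂μ, φ (xb t) ≠ ⊤ ∧ φ (x t) ≠ ⊤)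
    (hD : ∀ᵐ t ∂μ, Tendsto (fun s => (diffQuot φ (xb t) (x t) s : EReal)) (𝓝[>] 0) (𝓝 (D t))) :
    ∀ᵐ t ∂μ, Tendsto (fun s => ENNReal.ofReal (secantGap φ (xb t) (x t) s)) (𝓝[>] 0)
      (𝓝 (φ (x t) - φ (xb t) - D t).toENNReal) := by
  filter_upwards [hfin, hD] with t ht htD
  rw [sub_eq_coe_toReal_sub hbot ht.1 ht.2]
  exact (EReal.continuous_toENNReal.tendsto _).comp (tendsto_secantGap htD)

lemma ae_zero_le_sub_sub (hbot : ∀ u, φ u ≠ ⊥)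
    (hφ : ConvexOn ℝ {w | φ w ≠ ⊤} fun w => (φ w).toReal)
    (hfin : ∀ᵐ t ∂μ, φ (xb t) ≠ ⊤ ∧ φ (x t) ≠ ⊤)
    (hD : ∀ᵐ t ∂μ, Tendsto (fun s => (diffQuot φ (xb t) (x t) s : EReal)) (𝓝[>] 0) (𝓝 (D t))) :
    ∀ᵐ t ∂μ, 0 ≤ φ (x t) - φ (xb t) - D t := by
  filter_upwards [hfin, hD] with t ht htD
  rw [sub_eq_coe_toReal_sub hbot ht.1 ht.2]
  exact sub_nonneg_of_tendsto_diffQuot hφ ht.1 ht.2 htD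

lemma tendsto_lintegral_secantGap (hbot : ∀ u, φ u ≠ ⊥)
    (hφ : ConvexOn ℝ {w | φ w ≠ ⊤} fun w => (φ w).toReal) (hφm : Measurable φ)
    (hxb : Measurable xb) (hx : Measurable x) (hfin : ∀ᵐ t ∂μ, φ (xb t) ≠ ⊤ ∧ φ (x t) ≠ ⊤)
    (hD : ∀ᵐ t ∂μ, Tendsto (fun s => (diffQuot φ (xb t) (x t) s : EReal)) (𝓝[>] 0) (𝓝 (D t))) :
    Tendsto (fun s => ∫⁻ t, ENNReal.ofReal (secantGap φ (xb t) (x t) s) ∂μ) (𝓝[>] 0)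
      (𝓝 (∫⁻ t, (φ (x t) - φ (xb t) - D t).toENNReal ∂μ)) :=
  tendsto_lintegral_nhdsGT_of_antitoneOn one_pos
    (fun s => (measurable_secantGap hφm hxb hx s).ennreal_ofReal.aemeasurable)
    (hfin.mono fun _ ht _ hs _ hs' hss' => ENNReal.ofReal_le_ofReal
      (secantGap_antitoneOn hφ ht.1 ht.2 (Ioo_subset_Ioc_self hs) (Ioo_subset_Ioc_self hs') hss'))
    (ae_tendsto_ofReal_secantGap hbot hfin hD)

lemma tendsto_Phi_diffQuot (hbot : ∀ u, φ u ≠ ⊥)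
    (hφ : ConvexOn ℝ {w | φ w ≠ ⊤} fun w => (φ w).toReal) (hφm : Measurable φ)
    (hxb : Measurable xb) (hx : Measurable x) (hb : Integrable (fun t => (φ (xb t)).toReal) μ)
    (hh : Integrable (fun t => (φ (x t)).toReal - (φ (xb t)).toReal) μ)
    (hfin : ∀ᵐ t ∂μ, φ (xb t) ≠ ⊤ ∧ φ (x t) ≠ ⊤)
    (hD : ∀ᵐ t ∂μ, Tendsto (fun s => (diffQuot φ (xb t) (x t) s : EReal)) (𝓝[>] 0) (𝓝 (D t))) :
    Tendsto (fun s : ℝ => (Phi μ φ (xb + s • (x - xb)) - Phi μ φ xb) * ((s⁻¹ : ℝ) : EReal))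
      (𝓝[>] 0) (𝓝 (((∫ t, ((φ (x t)).toReal - (φ (xb t)).toReal) ∂μ : ℝ) : EReal) -
        (∫⁻ t, (φ (x t) - φ (xb t) - D t).toENNReal ∂μ : ℝ≥0∞))) := by
  refine (((EReal.continuous_coe_sub _).tendsto _).comp
    ((continuous_coe_ennreal_ereal.tendsto _).comp
      (tendsto_lintegral_secantGap hbot hφ hφm hxb hx hfin hD))).congr' ?_
  filter_upwards [Ioo_mem_nhdsGT one_pos] with s hs
  exact (Phi_add_smul_sub_sub_mul_inv hbot hφ hφm hxb hx hb hh hfin (Ioo_subset_Ioc_self hs)).symm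

lemma eintegral_eq_integral_sub_eintegral (hbot : ∀ u, φ u ≠ ⊥)
    (hφ : ConvexOn ℝ {w | φ w ≠ ⊤} fun w => (φ w).toReal) (hφm : Measurable φ)
    (hxb : Measurable xb) (hx : Measurable x)
    (hh : Integrable (fun t => (φ (x t)).toReal - (φ (xb t)).toReal) μ)
    (hfin : ∀ᵐ t ∂μ, φ (xb t) ≠ ⊤ ∧ φ (x t) ≠ ⊤)
    (hD : ∀ᵐ t ∂μ, Tendsto (fun s => (diffQuot φ (xb t) (x t) s : EReal)) (𝓝[>] 0) (𝓝 (D t))) :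
    eintegral μ D = ((∫ t, ((φ (x t)).toReal - (φ (xb t)).toReal) ∂μ : ℝ) : EReal) -
      eintegral μ (fun t => φ (x t) - φ (xb t) - D t) := by
  have hE := ae_zero_le_sub_sub hbot hφ hfin hD
  have hE_meas : AEMeasurable (fun t => (φ (x t) - φ (xb t) - D t).toENNReal) μ :=
    aemeasurable_of_tendsto_metrizable_ae _
      (fun s => (measurable_secantGap hφm hxb hx s).ennreal_ofReal.aemeasurable)
      (ae_tendsto_ofReal_secantGap hbot hfin hD)
  rw [eintegral_of_ae_nonneg hE, ← eintegral_coe_sub_coe_ennreal hh hE_meas]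
  refine eintegral_congr_ae ?_
  filter_upwards [hfin, hE] with t ht htE
  rw [EReal.coe_toENNReal htE, sub_eq_coe_toReal_sub hbot ht.1 ht.2, EReal.coe_sub_sub_cancel]

end integralFunctional

theorem stmt_8_general {T : Type*} [MeasurableSpace T] (μ : Measure T) (φ : ℝ → EReal)
    (hbot : ∀ u, φ u ≠ ⊥) (hlsc : LowerSemicontinuous φ)
    (hconv : ∀ u v a b : ℝ, 0 ≤ a → 0 ≤ b → a + b = 1 →
      φ (a * u + b * v) ≤ (a : EReal) * φ u + (b : EReal) * φ v)
    (dphi : ℝ → EReal)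
    (hdphi : ∀ u v : ℝ, φ u ≠ ⊤ → φ v ≠ ⊤ →
      Tendsto (fun s : ℝ => ((((φ (u + s * (v - u))).toReal - (φ u).toReal) / s : ℝ) : EReal))
        (𝓝[>] (0 : ℝ)) (𝓝 (dphi u * ((v : EReal) - (u : EReal)))))
    (X : Subspace ℝ (T → ℝ)) (hX : ∀ x ∈ X, Measurable x)
    (xb x : T → ℝ) (hxb : xb ∈ X) (hx : x ∈ X)
    (hPhib : ∃ r : ℝ, Phi μ φ xb = (r : EReal)) (hPhix : ∃ r : ℝ, Phi μ φ x = (r : EReal)) :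
    Tendsto (fun s : ℝ => (Phi μ φ (xb + s • (x - xb)) - Phi μ φ xb) * ((s⁻¹ : ℝ) : EReal))
        (𝓝[>] (0 : ℝ))
        (𝓝 (eintegral μ (fun t => dphi (xb t) * ((x t : EReal) - (xb t : EReal))))) ∧
      eintegral μ (fun t => dphi (xb t) * ((x t : EReal) - (xb t : EReal))) < ⊤ ∧
      Phi μ φ x - Phi μ φ xb -
          eintegral μ (fun t => dphi (xb t) * ((x t : EReal) - (xb t : EReal))) =
        eintegral μ
          (fun t => φ (x t) - φ (xb t) - dphi (xb t) * ((x t : EReal) - (xb t : EReal))) ∧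
      0 ≤ Phi μ φ x - Phi μ φ xb -
          eintegral μ (fun t => dphi (xb t) * ((x t : EReal) - (xb t : EReal))) := by
  have hφ := convexOn_toReal_of_forall_le hbot hconv
  have hφm : Measurable φ := hlsc.measurable
  have hxbm := hX xb hxb
  have hxm := hX x hx
  obtain ⟨hb, hb_top⟩ := integrable_toReal_and_ae_ne_top_of_eintegral_eq_coe
    (f := fun t => φ (xb t)) (hφm.comp hxbm).aemeasurable hPhib.choose_spec
  obtain ⟨hbx, hbx_top⟩ := integrable_toReal_and_ae_ne_top_of_eintegral_eq_coe
    (f := fun t => φ (x t)) (hφm.comp hxm).aemeasurable hPhix.choose_spec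
  have hh : Integrable (fun t => (φ (x t)).toReal - (φ (xb t)).toReal) μ := hbx.sub hb
  have hfin := hb_top.and hbx_top
  have hD := hfin.mono fun t ht => hdphi (xb t) (x t) ht.1 ht.2
  have hPhi : Phi μ φ x - Phi μ φ xb =
      ((∫ t, ((φ (x t)).toReal - (φ (xb t)).toReal) ∂μ : ℝ) : EReal) := by
    rw [Phi, Phi, eintegral_eq_integral_toReal hbx hbx_top fun _ => hbot _,
      eintegral_eq_integral_toReal hb hb_top fun _ => hbot _, ← EReal.coe_sub, integral_sub hbx hb]
  have hDE := eintegral_eq_integral_sub_eintegral hbot hφ hφm hxbm hxm hh hfin hD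
  have hE := eintegral_of_ae_nonneg (ae_zero_le_sub_sub hbot hφ hfin hD)
  refine ⟨?_, ?_, ?_, ?_⟩
  · rw [hDE, hE]
    exact tendsto_Phi_diffQuot hbot hφ hφm hxbm hxm hb hh hfin hD
  · rw [hDE, hE]
    exact (EReal.coe_sub_coe_ennreal_le _ _).trans_lt (EReal.coe_lt_top _)
  · rw [hPhi, hDE, EReal.coe_sub_sub_cancel]
  · rw [hPhi, hDE, EReal.coe_sub_sub_cancel, hE]
    exact EReal.coe_ennreal_nonneg _

/-- Directional derivative formula: if `Φ(x̄), Φ(x) ∈ ℝ`, then the one-sided directional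
derivative `Φ'(x̄; x - x̄)` exists in `[-∞, ∞)`, equals the extended integral of
`φ'(x̄(t))·(x(t) - x̄(t))`, and `Φ(x) - Φ(x̄) - Φ'(x̄; x - x̄) ≥ 0`. The function `dphi` encodes
the derivative of `φ` (one-sided, possibly infinite, at finite endpoints of the domain), via the
convergence of directional difference quotients. -/
theorem stmt_8 {T : Type*} [MeasurableSpace T] (μ : Measure T) (φ : ℝ → EReal)
    (hbot : ∀ u, φ u ≠ ⊥) (hproper : ∃ u, φ u ≠ ⊤) (hlsc : LowerSemicontinuous φ)
    (hconv : ∀ u v a b : ℝ, 0 ≤ a → 0 ≤ b → a + b = 1 →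
      φ (a * u + b * v) ≤ (a : EReal) * φ u + (b : EReal) * φ v)
    (hstrict : ∀ u v : ℝ, φ u ≠ ⊤ → φ v ≠ ⊤ → u ≠ v → ∀ a b : ℝ, 0 < a → 0 < b → a + b = 1 →
      φ (a * u + b * v) < (a : EReal) * φ u + (b : EReal) * φ v)
    (hint : (interior {u : ℝ | φ u ≠ ⊤}).Nonempty)
    (dphi : ℝ → EReal)
    (hdphi : ∀ u v : ℝ, φ u ≠ ⊤ → φ v ≠ ⊤ →
      Tendsto (fun s : ℝ => ((((φ (u + s * (v - u))).toReal - (φ u).toReal) / s : ℝ) : EReal))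
        (𝓝[>] (0 : ℝ)) (𝓝 (dphi u * ((v : EReal) - (u : EReal)))))
    (X : Subspace ℝ (T → ℝ)) (hX : ∀ x ∈ X, Measurable x)
    (xb x : T → ℝ) (hxb : xb ∈ X) (hx : x ∈ X)
    (hPhib : ∃ r : ℝ, Phi μ φ xb = (r : EReal)) (hPhix : ∃ r : ℝ, Phi μ φ x = (r : EReal)) :
    Tendsto (fun s : ℝ => (Phi μ φ (xb + s • (x - xb)) - Phi μ φ xb) * ((s⁻¹ : ℝ) : EReal))
        (𝓝[>] (0 : ℝ))
        (𝓝 (eintegral μ (fun t => dphi (xb t) * ((x t : EReal) - (xb t : EReal))))) ∧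
      eintegral μ (fun t => dphi (xb t) * ((x t : EReal) - (xb t : EReal))) < ⊤ ∧
      Phi μ φ x - Phi μ φ xb -
          eintegral μ (fun t => dphi (xb t) * ((x t : EReal) - (xb t : EReal))) =
        eintegral μ
          (fun t => φ (x t) - φ (xb t) - dphi (xb t) * ((x t : EReal) - (xb t : EReal))) ∧
      0 ≤ Phi μ φ x - Phi μ φ xb -
          eintegral μ (fun t => dphi (xb t) * ((x t : EReal) - (xb t : EReal))) :=
  stmt_8_general μ φ hbot hlsc hconv dphi hdphi X hX xb x hxb hx hPhib hPhix
end

section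
/- Lagrange multiplier sufficiency: let x̄ ∈ X ∩ F_b with Φ(x̄) ∈ ℝ. If there exist α₁,…,α_m ∈ ℝ such that φ'(x̄(t)) = α₁ψ₁(t) + … + α_mψ_m(t) for a.e. t ∈ T, then x̄ is an optimal solution of the entropy minimization problem (P). -/
/-!
Since `φ` is convex with right derivative `φ'`, the gradient inequality
`φ(x̄ t) + φ'(x̄ t) (x t - x̄ t) ≤ φ(x t)` holds a.e. for every feasible `x`. The correction term
is `(∑ αₖ ψₖ)(x - x̄)`, which is integrable with integral `∑ αₖ (bₖ - bₖ) = 0`. As `Φ(x̄)` is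
finite, `φ ∘ x̄` is integrable, so integrating gives `Φ(x̄) ≤ Φ(x)`; the extended integral of
`φ ∘ x` dominates the integral of its integrable minorant even when `Φ(x) = ∞`.
-/

open MeasureTheory ENNReal Filter Set Topology

/-- The feasible set of the entropy minimization problem: measurable `x` with `x·ψ_k ∈ L¹` and
`∫ x ψ_k dμ = b_k` for each `k`. -/
def Feas {T : Type*} [MeasurableSpace T] (μ : Measure T) {m : ℕ} (ψ : Fin m → T → ℝ)
    (b : Fin m → ℝ) : Set (T → ℝ) :=
  {x : T → ℝ | Measurable x ∧ (∀ k, Integrable (fun t => x t * ψ k t) μ) ∧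
    ∀ k, (∫ t, x t * ψ k t ∂μ) = b k}

lemma measurable_epos : Measurable epos :=
  Measurable.ite (measurableSet_singleton ⊤) measurable_const
    (ENNReal.measurable_ofReal.comp measurable_ereal_toReal)

lemma epos_coe (r : ℝ) : epos r = ENNReal.ofReal r := if_neg (EReal.coe_ne_top r)

lemma epos_mono : Monotone epos := by
  intro a b hab
  by_cases hb : b = ⊤
  · simp [epos, hb]
  by_cases ha : a = ⊥
  · simp [epos, ha]
  rw [epos, epos, if_neg hb, if_neg (ne_top_of_le_ne_top hb hab)]
  exact ENNReal.ofReal_le_ofReal (EReal.toReal_le_toReal hab ha hb)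

lemma ne_top_of_epos_ne_top {a : EReal} (h : epos a ≠ ⊤) : a ≠ ⊤ := by
  rintro rfl
  exact h (if_pos rfl)

-- This holds at `⊤` and `⊥` too, where every term is the junk value `0`.
lemma toReal_eq_toReal_epos_sub_toReal_epos_neg (a : EReal) :
    a.toReal = (epos a).toReal - (epos (-a)).toReal := by
  induction a using EReal.rec with
  | bot => simp [epos]
  | top => simp [epos]
  | coe r =>
    rw [← EReal.coe_neg, epos_coe, epos_coe, ENNReal.toReal_ofReal', ENNReal.toReal_ofReal',
      EReal.toReal_coe, max_zero_sub_max_neg_zero_eq_self]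

section Eintegral

variable {T : Type*} [MeasurableSpace T] {μ : Measure T} {f : T → EReal}

lemma lintegral_epos_ne_top_of_eintegral_eq_coe {r : ℝ} (h : eintegral μ f = r) :
    ∫⁻ t, epos (f t) ∂μ ≠ ⊤ ∧ ∫⁻ t, epos (-f t) ∂μ ≠ ⊤ := by
  have hP : ∫⁻ t, epos (f t) ∂μ ≠ ⊤ := fun hP =>
    EReal.coe_ne_top r (by rw [← h, eintegral, if_pos hP])
  refine ⟨hP, fun hN => EReal.coe_ne_bot r ?_⟩
  rw [← h, eintegral, if_neg hP, hN, EReal.coe_ennreal_top, EReal.sub_top]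

lemma ae_ne_top_of_lintegral_epos_ne_top (hf : Measurable f) (hP : ∫⁻ t, epos (f t) ∂μ ≠ ⊤) :
    ∀ᵐ t ∂μ, f t ≠ ⊤ := by
  filter_upwards [ae_lt_top (measurable_epos.comp hf) hP] with t ht
  exact ne_top_of_epos_ne_top ht.ne

lemma integrable_toReal_of_lintegral_epos_ne_top (hf : Measurable f)
    (hP : ∫⁻ t, epos (f t) ∂μ ≠ ⊤) (hN : ∫⁻ t, epos (-f t) ∂μ ≠ ⊤) :
    Integrable (fun t => (f t).toReal) μ := by
  simp only [toReal_eq_toReal_epos_sub_toReal_epos_neg]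
  exact (integrable_toReal_of_lintegral_ne_top (measurable_epos.comp hf).aemeasurable hP).sub
    (integrable_toReal_of_lintegral_ne_top (measurable_epos.comp hf.neg).aemeasurable hN)

lemma eintegral_eq_integral_toReal_s15 (hf : Measurable f)
    (hP : ∫⁻ t, epos (f t) ∂μ ≠ ⊤) (hN : ∫⁻ t, epos (-f t) ∂μ ≠ ⊤) :
    eintegral μ f = ((∫ t, (f t).toReal ∂μ : ℝ) : EReal) := by
  have hPm : AEMeasurable (fun t => epos (f t)) μ := (measurable_epos.comp hf).aemeasurable
  have hNm : AEMeasurable (fun t => epos (-f t)) μ := (measurable_epos.comp hf.neg).aemeasurable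
  simp only [toReal_eq_toReal_epos_sub_toReal_epos_neg]
  rw [integral_sub (integrable_toReal_of_lintegral_ne_top hPm hP)
      (integrable_toReal_of_lintegral_ne_top hNm hN),
    integral_toReal hPm (ae_lt_top' hPm hP), integral_toReal hNm (ae_lt_top' hNm hN),
    eintegral, if_neg hP, EReal.coe_sub, EReal.coe_ennreal_toReal hP, EReal.coe_ennreal_toReal hN]

lemma integral_le_eintegral {g : T → ℝ} (hg : Integrable g μ) (hf : Measurable f)
    (hgf : ∀ᵐ t ∂μ, (g t : EReal) ≤ f t) :
    ((∫ t, g t ∂μ : ℝ) : EReal) ≤ eintegral μ f := by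
  by_cases hP : ∫⁻ t, epos (f t) ∂μ = ⊤
  · simp [eintegral, hP]
  have hN : ∫⁻ t, epos (-f t) ∂μ ≠ ⊤ := by
    refine ne_top_of_le_ne_top hg.hasFiniteIntegral.ne (lintegral_mono_ae ?_)
    filter_upwards [hgf] with t ht
    calc epos (-f t) ≤ epos (-g t : ℝ) := epos_mono (by simpa using ht)
      _ ≤ ‖g t‖ₑ := by
        rw [epos_coe, Real.enorm_eq_ofReal_abs]
        exact ENNReal.ofReal_le_ofReal (neg_le_abs _)
  rw [eintegral_eq_integral_toReal_s15 hf hP hN, EReal.coe_le_coe_iff]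
  refine integral_mono_ae hg (integrable_toReal_of_lintegral_epos_ne_top hf hP hN) ?_
  filter_upwards [hgf, ae_ne_top_of_lintegral_epos_ne_top hf hP] with t ht hne
  simpa using EReal.toReal_le_toReal ht (EReal.coe_ne_bot _) hne

end Eintegral

section Convex

variable {φ : ℝ → EReal}

lemma slope_le_sub_of_convex (hbot : ∀ u, φ u ≠ ⊥)
    (hconv : ∀ u v a b' : ℝ, 0 ≤ a → 0 ≤ b' → a + b' = 1 →
      φ (a * u + b' * v) ≤ (a : EReal) * φ u + (b' : EReal) * φ v)
    {u v s : ℝ} (hu : φ u ≠ ⊤) (hv : φ v ≠ ⊤) (hs : s ∈ Ioo (0 : ℝ) 1) :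
    ((φ (u + s * (v - u))).toReal - (φ u).toReal) / s ≤ (φ v).toReal - (φ u).toReal := by
  have hconv_s := hconv u v (1 - s) s (by linarith [hs.2]) hs.1.le (by ring)
  rw [show (1 - s) * u + s * v = u + s * (v - u) by ring, ← EReal.coe_toReal hu (hbot u),
    ← EReal.coe_toReal hv (hbot v), ← EReal.coe_mul, ← EReal.coe_mul, ← EReal.coe_add] at hconv_s
  have hle := EReal.toReal_le_toReal hconv_s (hbot _) (EReal.coe_ne_top _)
  rw [EReal.toReal_coe] at hle
  rw [div_le_iff₀ hs.1]
  nlinarith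

lemma toReal_add_mul_sub_le_of_convex (hbot : ∀ u, φ u ≠ ⊥)
    (hconv : ∀ u v a b' : ℝ, 0 ≤ a → 0 ≤ b' → a + b' = 1 →
      φ (a * u + b' * v) ≤ (a : EReal) * φ u + (b' : EReal) * φ v)
    {dphi : ℝ → EReal}
    (hdphi : ∀ u v : ℝ, φ u ≠ ⊤ → φ v ≠ ⊤ →
      Tendsto (fun s : ℝ => ((((φ (u + s * (v - u))).toReal - (φ u).toReal) / s : ℝ) : EReal))
        (𝓝[>] (0 : ℝ)) (𝓝 (dphi u * ((v : EReal) - (u : EReal)))))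
    {u v c : ℝ} (hu : φ u ≠ ⊤) (hc : dphi u = c) :
    (((φ u).toReal + c * (v - u) : ℝ) : EReal) ≤ φ v := by
  by_cases hv : φ v = ⊤
  · exact hv ▸ le_top
  have hslope : (c * (v - u) : EReal) ≤ (((φ v).toReal - (φ u).toReal : ℝ) : EReal) := by
    refine le_of_tendsto (hc ▸ hdphi u v hu hv) ?_
    filter_upwards [Ioo_mem_nhdsGT (zero_lt_one' ℝ)] with s hs
    exact EReal.coe_le_coe_iff.mpr (slope_le_sub_of_convex hbot hconv hu hv hs)
  rw [← EReal.coe_toReal hv (hbot v), EReal.coe_le_coe_iff]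
  rw [← EReal.coe_sub, ← EReal.coe_mul, EReal.coe_le_coe_iff] at hslope
  linarith

end Convex

lemma sum_mul_mul_sub_eq {T : Type*} {m : ℕ} (α : Fin m → ℝ) (ψ : Fin m → T → ℝ)
    (x y : T → ℝ) :
    (fun t => (∑ k, α k * ψ k t) * (x t - y t)) =
      fun t => ∑ k, (α k * (x t * ψ k t) - α k * (y t * ψ k t)) := by
  ext t
  rw [Finset.sum_mul]
  exact Finset.sum_congr rfl fun k _ => by ring

section Multiplier

variable {T : Type*} [MeasurableSpace T] {μ : Measure T} {m : ℕ} {ψ : Fin m → T → ℝ}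
  {b : Fin m → ℝ} {x y : T → ℝ}

lemma integrable_sum_mul_mul_sub (α : Fin m → ℝ) (hx : x ∈ Feas μ ψ b) (hy : y ∈ Feas μ ψ b) :
    Integrable (fun t => (∑ k, α k * ψ k t) * (x t - y t)) μ := by
  rw [sum_mul_mul_sub_eq]
  exact integrable_finsetSum _ fun k _ =>
    ((hx.2.1 k).const_mul (α k)).sub ((hy.2.1 k).const_mul (α k))

lemma integral_sum_mul_mul_sub_eq_zero (α : Fin m → ℝ) (hx : x ∈ Feas μ ψ b)
    (hy : y ∈ Feas μ ψ b) :
    ∫ t, (∑ k, α k * ψ k t) * (x t - y t) ∂μ = 0 := by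
  rw [sum_mul_mul_sub_eq,
    integral_finsetSum (f := fun k t => α k * (x t * ψ k t) - α k * (y t * ψ k t)) _
      fun k _ => ((hx.2.1 k).const_mul (α k)).sub ((hy.2.1 k).const_mul (α k))]
  refine Finset.sum_eq_zero fun k _ => ?_
  rw [integral_sub ((hx.2.1 k).const_mul (α k)) ((hy.2.1 k).const_mul (α k)),
    integral_const_mul, integral_const_mul, hx.2.2, hy.2.2, sub_self]

end Multiplier

theorem stmt_15_general {T : Type*} [MeasurableSpace T] (μ : Measure T) (φ : ℝ → EReal)
(hbot : ∀ u, φ u ≠ ⊥) (hlsc : LowerSemicontinuous φ)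
    (hconv : ∀ u v a b' : ℝ, 0 ≤ a → 0 ≤ b' → a + b' = 1 →
      φ (a * u + b' * v) ≤ (a : EReal) * φ u + (b' : EReal) * φ v)
(dphi : ℝ → EReal)
    (hdphi : ∀ u v : ℝ, φ u ≠ ⊤ → φ v ≠ ⊤ →
      Tendsto (fun s : ℝ => ((((φ (u + s * (v - u))).toReal - (φ u).toReal) / s : ℝ) : EReal))
        (𝓝[>] (0 : ℝ)) (𝓝 (dphi u * ((v : EReal) - (u : EReal)))))
    (m : ℕ) (ψ : Fin m → T → ℝ) (b : Fin m → ℝ)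
    (X : Subspace ℝ (T → ℝ))
    (xb : T → ℝ) (hxbF : xb ∈ Feas μ ψ b)
    (hfin : ∃ r : ℝ, Phi μ φ xb = (r : EReal))
    (α : Fin m → ℝ)
    (hmult : ∀ᵐ t ∂μ, dphi (xb t) = ((∑ k, α k * ψ k t : ℝ) : EReal)) :
    ∀ x ∈ X, x ∈ Feas μ ψ b → Phi μ φ xb ≤ Phi μ φ x := by
  intro x _ hxF
  obtain ⟨r, hr⟩ := hfin
  have hφ : Measurable φ := hlsc.measurable
  have hφxb_meas : Measurable fun t => φ (xb t) := hφ.comp hxbF.1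
  obtain ⟨hP, hN⟩ := lintegral_epos_ne_top_of_eintegral_eq_coe hr
  set g := fun t => (φ (xb t)).toReal
  set h := fun t => (∑ k, α k * ψ k t) * (x t - xb t)
  have hg : Integrable g μ := integrable_toReal_of_lintegral_epos_ne_top hφxb_meas hP hN
  have hh : Integrable h μ := integrable_sum_mul_mul_sub α hxF hxbF
  have hgrad : ∀ᵐ t ∂μ, ((g t + h t : ℝ) : EReal) ≤ φ (x t) := by
    filter_upwards [hmult, ae_ne_top_of_lintegral_epos_ne_top hφxb_meas hP] with t hmult_t hxb_t
    exact toReal_add_mul_sub_le_of_convex hbot hconv hdphi hxb_t hmult_t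
  calc Phi μ φ xb = ((∫ t, g t ∂μ : ℝ) : EReal) := eintegral_eq_integral_toReal_s15 hφxb_meas hP hN
    _ = ((∫ t, (g t + h t) ∂μ : ℝ) : EReal) := by
      rw [integral_add hg hh, integral_sum_mul_mul_sub_eq_zero α hxF hxbF, add_zero]
    _ ≤ Phi μ φ x := integral_le_eintegral (hg.add hh) (hφ.comp hxF.1) hgrad

/-- Lagrange multiplier sufficiency: if `x̄` is feasible with `Φ(x̄) ∈ ℝ` and
`φ'(x̄(t)) = α₁ψ₁(t) + … + α_mψ_m(t)` a.e. for some real `α₁,…,α_m`, then `x̄` is an optimal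
solution of (P). -/
theorem stmt_15 {T : Type*} [MeasurableSpace T] (μ : Measure T) (φ : ℝ → EReal)
(hbot : ∀ u, φ u ≠ ⊥) (hproper : ∃ u, φ u ≠ ⊤) (hlsc : LowerSemicontinuous φ)
    (hconv : ∀ u v a b' : ℝ, 0 ≤ a → 0 ≤ b' → a + b' = 1 →
      φ (a * u + b' * v) ≤ (a : EReal) * φ u + (b' : EReal) * φ v)
    (hstrict : ∀ u v : ℝ, φ u ≠ ⊤ → φ v ≠ ⊤ → u ≠ v → ∀ a b' : ℝ, 0 < a → 0 < b' → a + b' = 1 →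
      φ (a * u + b' * v) < (a : EReal) * φ u + (b' : EReal) * φ v)
    (hint : (interior {u : ℝ | φ u ≠ ⊤}).Nonempty)
(dphi : ℝ → EReal)
    (hdphi : ∀ u v : ℝ, φ u ≠ ⊤ → φ v ≠ ⊤ →
      Tendsto (fun s : ℝ => ((((φ (u + s * (v - u))).toReal - (φ u).toReal) / s : ℝ) : EReal))
        (𝓝[>] (0 : ℝ)) (𝓝 (dphi u * ((v : EReal) - (u : EReal)))))
    (m : ℕ) (ψ : Fin m → T → ℝ) (hψ : ∀ k, Measurable (ψ k)) (b : Fin m → ℝ)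
    (X : Subspace ℝ (T → ℝ)) (hX : ∀ x ∈ X, Measurable x)
    (xb : T → ℝ) (hxbX : xb ∈ X) (hxbF : xb ∈ Feas μ ψ b)
    (hfin : ∃ r : ℝ, Phi μ φ xb = (r : EReal))
    (α : Fin m → ℝ)
    (hmult : ∀ᵐ t ∂μ, dphi (xb t) = ((∑ k, α k * ψ k t : ℝ) : EReal)) :
    ∀ x ∈ X, x ∈ Feas μ ψ b → Phi μ φ xb ≤ Phi μ φ x :=
  stmt_15_general μ φ hbot hlsc hconv dphi hdphi m ψ b X xb hxbF hfin α hmult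
end
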